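/- Let σ be a 321-avoiding involution of {1,…,n} with n > 2. Then σ is simple if and only if all three of the following hold: (i) σ has no fixed points; (ii) for every k with 1 ≤ k < n, the number of indices j ≤ k with j < σ(j) is strictly greater than the number of indices j ≤ k with σ(j) < j (the associated Dyck path is irreducible); (iii) there is no x with x < σ(x), x+1 < σ(x+1), and σ(x+1) = σ(x) + 1 (no pair of corresponding consecutive up steps and consecutive down steps). -/
import Mathlib


/-- A permutation of `Fin n` avoids the pattern 321 if there are no indices
`i < j < k` with `π i > π j > π k`. -/
def Avoids321 {n : ℕ} (π : Equiv.Perm (Fin n)) : Prop :=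
  ¬ ∃ i j k : Fin n, i < j ∧ j < k ∧ π k < π j ∧ π j < π i

/-- A permutation is an involution if it is its own inverse pointwise. -/
def IsInvolution {n : ℕ} (π : Equiv.Perm (Fin n)) : Prop :=
  ∀ i, π (π i) = i

/-- A finset of `Fin n` consists of consecutive integers iff it is order-convex. -/
def IsConsecutive {n : ℕ} (I : Finset (Fin n)) : Prop :=
  ∀ x ∈ I, ∀ y ∈ I, ∀ z : Fin n, x ≤ z → z ≤ y → z ∈ I

/-- A permutation is simple if every interval (a set of consecutive integers whose
image is also a set of consecutive integers) has cardinality at most 1 or `n`. -/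
def IsSimplePerm {n : ℕ} (π : Equiv.Perm (Fin n)) : Prop :=
  ∀ I : Finset (Fin n), IsConsecutive I → IsConsecutive (I.image π) →
    I.card ≤ 1 ∨ I.card = n

/-- A permutation of `{1,…,n}` (here 0-indexed on `Fin n`) is sum-decomposable
(of type 12) if it maps some proper nonempty initial segment onto itself. -/
def SumDecomposable {n : ℕ} (π : Equiv.Perm (Fin n)) : Prop :=
  ∃ k : ℕ, 1 ≤ k ∧ k < n ∧
    (π : Fin n → Fin n) '' {i : Fin n | (i : ℕ) < k} = {i : Fin n | (i : ℕ) < k}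

/-- A permutation is skew-decomposable (of type 21) if it maps some proper nonempty
initial segment onto the corresponding final segment. -/
def SkewDecomposable {n : ℕ} (π : Equiv.Perm (Fin n)) : Prop :=
  ∃ k : ℕ, 1 ≤ k ∧ k < n ∧
    (π : Fin n → Fin n) '' {i : Fin n | (i : ℕ) < k} = {i : Fin n | n - k ≤ (i : ℕ)}

namespace SimpleDyckAux

variable {n : ℕ} {σ : Equiv.Perm (Fin n)}

lemma no321 (hav : Avoids321 σ) {i j k : Fin n} (hij : i < j) (hjk : j < k)
    (h1 : σ j < σ i) (h2 : σ k < σ j) : False := hav ⟨i, j, k, hij, hjk, h2, h1⟩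

lemma inc_on_exc (hav : Avoids321 σ) (hinv : IsInvolution σ) {a b : Fin n}
    (ha : a < σ a) (hb : b < σ b) (hab : a < b) : σ a < σ b := by
  by_contra h
  push_neg at h
  have hne : σ b ≠ σ a := fun he => absurd (σ.injective he) (ne_of_gt hab)
  have hlt : σ b < σ a := lt_of_le_of_ne h hne
  exact no321 hav hab hb hlt (by rw [hinv]; exact hb)

/-- image of a σ-closed finset equals itself -/
lemma image_eq_of_closed {I : Finset (Fin n)} (hcl : ∀ x ∈ I, σ x ∈ I) :
    I.image σ = I := by
  apply Finset.eq_of_subset_of_card_le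
  · intro y hy
    obtain ⟨x, hx, rfl⟩ := Finset.mem_image.mp hy
    exact hcl x hx
  · rw [Finset.card_image_of_injective _ σ.injective]

lemma natCard_eq (p : Fin n → Prop) [DecidablePred p] :
    Nat.card {j : Fin n // p j} = (Finset.univ.filter p).card := by
  rw [Nat.card_eq_fintype_card]
  exact Fintype.card_subtype _

lemma prefix_balance (hinv : IsInvolution σ) {k : ℕ}
    (hcl : ∀ j : Fin n, (j : ℕ) < k → ((σ j : Fin n) : ℕ) < k) :
    (Finset.univ.filter fun j : Fin n => (j : ℕ) < k ∧ σ j < j).card =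
    (Finset.univ.filter fun j : Fin n => (j : ℕ) < k ∧ j < σ j).card := by
  apply Finset.card_bij' (fun j _ => σ j) (fun j _ => σ j)
  · intro a ha
    simp only [Finset.mem_filter, Finset.mem_univ, true_and] at ha ⊢
    refine ⟨lt_trans (Fin.lt_def.mp ha.2) ha.1, ?_⟩
    rw [hinv]; exact ha.2
  · intro a ha
    simp only [Finset.mem_filter, Finset.mem_univ, true_and] at ha ⊢
    refine ⟨hcl a ha.1, ?_⟩
    rw [hinv]; exact ha.2
  · intro a _; exact hinv a
  · intro a _; exact hinv a

/-- the Dyck condition as used below -/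
def DyckCond {n : ℕ} (σ : Equiv.Perm (Fin n)) : Prop :=
  ∀ k : ℕ, 1 ≤ k → k < n →
    Nat.card {j : Fin n // (j : ℕ) < k ∧ σ j < j} <
      Nat.card {j : Fin n // (j : ℕ) < k ∧ j < σ j}

lemma no_closed_prefix (hinv : IsInvolution σ) (hdy : DyckCond σ)
    {k : ℕ} (h1 : 1 ≤ k) (h2 : k < n)
    (hcl : ∀ j : Fin n, (j : ℕ) < k → ((σ j : Fin n) : ℕ) < k) : False := by
  have := hdy k h1 h2
  rw [natCard_eq, natCard_eq, prefix_balance hinv hcl] at this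
  exact lt_irrefl _ this

lemma no_invariant_interval (hav : Avoids321 σ) (hinv : IsInvolution σ)
    (hfix : ∀ i : Fin n, σ i ≠ i) (hdy : DyckCond σ)
    {I : Finset (Fin n)} (hIc : IsConsecutive I) (hne : I.Nonempty)
    (hcard : I.card < n) (hcl : ∀ x ∈ I, σ x ∈ I) : False := by
  set a := I.min' hne with ha
  set b := I.max' hne with hb
  have hamem : a ∈ I := I.min'_mem hne
  have hbmem : b ∈ I := I.max'_mem hne
  -- an excedance pair inside I
  obtain ⟨x0, hx0⟩ := hne
  have hexc : ∃ x ∈ I, σ x ∈ I ∧ x < σ x := by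
    rcases lt_trichotomy x0 (σ x0) with h | h | h
    · exact ⟨x0, hx0, hcl x0 hx0, h⟩
    · exact absurd h.symm (hfix x0)
    · exact ⟨σ x0, hcl x0 hx0, by rw [hinv]; exact ⟨hx0, h⟩⟩
  obtain ⟨x, hxI, hsxI, hxlt⟩ := hexc
  by_cases ha0 : (a : ℕ) = 0
  · -- I is a prefix
    have hmem : ∀ j : Fin n, (j : ℕ) < (b : ℕ) + 1 → j ∈ I := by
      intro j hj
      exact hIc a hamem b hbmem j (Fin.le_def.mpr (by omega)) (Fin.le_def.mpr (by omega))
    have hblt : (b : ℕ) + 1 < n := by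
      by_contra hc
      push_neg at hc
      have huniv : (Finset.univ : Finset (Fin n)) ⊆ I := fun j _ => hmem j (by omega)
      have := Finset.card_le_card huniv
      simp [Finset.card_univ] at this
      omega
    refine no_closed_prefix hinv hdy (by omega) hblt (fun j hj => ?_)
    have := I.le_max' _ (hcl j (hmem j hj))
    rw [Fin.le_def] at this
    omega
  · -- prefix below a is closed
    refine no_closed_prefix hinv hdy (by omega) a.isLt (fun j hj => ?_)
    have hjnI : j ∉ I := by
      intro hjI
      have := I.min'_le j hjI
      rw [Fin.le_def] at this
      omega
    by_contra hout
    push_neg at hout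
    rcases le_or_gt (σ j) b with hle | hgt
    · -- σ j ∈ I, contradiction
      have : σ j ∈ I := hIc a hamem b hbmem (σ j) (Fin.le_def.mpr (by omega)) hle
      have := hcl _ this
      rw [hinv] at this
      exact hjnI this
    · -- 321 pattern
      have h1 : j < x := by
        rw [Fin.lt_def]
        have := I.min'_le x hxI
        rw [Fin.le_def] at this
        omega
      have h2 : σ x < σ j := lt_of_le_of_lt (I.le_max' _ hsxI) hgt
      exact no321 hav h1 hxlt h2 (by rw [hinv]; exact hxlt)

/-- the third condition -/
def NoDoubleRise {n : ℕ} (σ : Equiv.Perm (Fin n)) : Prop :=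
  ¬ ∃ x : Fin n, ∃ hx : (x : ℕ) + 1 < n,
    x < σ x ∧ (⟨(x : ℕ) + 1, hx⟩ : Fin n) < σ ⟨(x : ℕ) + 1, hx⟩ ∧
    (σ ⟨(x : ℕ) + 1, hx⟩ : ℕ) = (σ x : ℕ) + 1

lemma no_shift (hav : Avoids321 σ) (hinv : IsInvolution σ) (hthird : NoDoubleRise σ)
    {P Q : Finset (Fin n)} (hPc : IsConsecutive P) (hQc : IsConsecutive Q)
    (hPQ : ∀ x ∈ P, σ x ∈ Q) (hQP : ∀ y ∈ Q, σ y ∈ P)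
    (hlt : ∀ x ∈ P, ∀ y ∈ Q, x < y) (hcard : 1 < P.card) : False := by
  have hne : P.Nonempty := Finset.card_pos.mp (by omega)
  set a := P.min' hne with ha
  have hamem : a ∈ P := P.min'_mem hne
  obtain ⟨w, hwP, hwa⟩ := Finset.exists_mem_ne hcard a
  have haw : a < w := lt_of_le_of_ne (P.min'_le w hwP) (Ne.symm hwa)
  have han : (a : ℕ) + 1 < n := by
    have := Fin.lt_def.mp haw
    have := w.isLt
    omega
  set a' : Fin n := ⟨(a : ℕ) + 1, han⟩ with ha'
  have ha'mem : a' ∈ P := by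
    refine hPc a hamem w hwP a' (Fin.le_def.mpr (by simp [ha'])) (Fin.le_def.mpr ?_)
    have := Fin.lt_def.mp haw
    simp [ha']
    omega
  have hexc : ∀ x ∈ P, x < σ x := fun x hx => hlt x hx (σ x) (hPQ x hx)
  have hea : a < σ a := hexc a hamem
  have hea' : a' < σ a' := hexc a' ha'mem
  have haa' : a < a' := Fin.lt_def.mpr (by simp [ha'])
  have hσlt : σ a < σ a' := inc_on_exc hav hinv hea hea' haa'
  have hkey : (σ a' : ℕ) = (σ a : ℕ) + 1 := by
    by_contra hc
    have hz : (σ a : ℕ) + 1 < (σ a' : ℕ) := by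
      have := Fin.lt_def.mp hσlt
      omega
    set z : Fin n := ⟨(σ a : ℕ) + 1, lt_trans hz (σ a').isLt⟩ with hzdef
    have hzQ : z ∈ Q := by
      refine hQc (σ a) (hPQ a hamem) (σ a') (hPQ a' ha'mem) z
        (Fin.le_def.mpr (by simp [hzdef])) (Fin.le_def.mpr ?_)
      simp [hzdef]; omega
    set y := σ z with hy
    have hyP : y ∈ P := hQP z hzQ
    have hσy : σ y = z := by rw [hy, hinv]
    have hyne : y ≠ a := by
      intro he
      rw [he] at hσy
      have := congrArg Fin.val hσy
      simp [hzdef] at this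
    have hyne' : y ≠ a' := by
      intro he
      rw [he] at hσy
      rw [hσy] at hz
      simp [hzdef] at hz
    have hya' : a' < y := by
      have h1 := Fin.le_def.mp (P.min'_le y hyP)
      have h2 : (y : ℕ) ≠ (a : ℕ) := fun he => hyne (Fin.ext he)
      have h3 : (y : ℕ) ≠ (a : ℕ) + 1 := by
        intro he
        exact hyne' (Fin.ext (by simp [ha', he]))
      rw [Fin.lt_def]
      simp [ha']
      omega
    have := inc_on_exc hav hinv hea' (hexc y hyP) hya'
    rw [hσy] at this
    have := Fin.lt_def.mp this
    simp [hzdef] at this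
    omega
  exact hthird ⟨a, han, hea, hea', hkey⟩



lemma simple_no_fixed (hn : 2 < n) (hav : Avoids321 σ) (hinv : IsInvolution σ)
    (hs : IsSimplePerm σ) : ∀ i : Fin n, σ i ≠ i := by
  intro i hfi
  have hlt_fix : ∀ j : Fin n, j < i → σ j < i := by
    intro j hj
    rcases lt_trichotomy (σ j) i with h | h | h
    · exact h
    · exact absurd (σ.injective (h.trans hfi.symm)) (ne_of_lt hj)
    · exact (no321 hav hj h (by rw [hfi]; exact h) (by rw [hinv, hfi]; exact hj)).elim
  have hgt_fix : ∀ j : Fin n, i < j → i < σ j := by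
    intro j hj
    rcases lt_trichotomy (σ j) i with h | h | h
    · exact (no321 hav h hj (by rw [hinv, hfi]; exact hj) (by rw [hfi]; exact h)).elim
    · exact absurd (σ.injective (h.trans hfi.symm)) (ne_of_gt hj)
    · exact h
  have hclI : ∀ x ∈ Finset.Iic i, σ x ∈ Finset.Iic i := by
    intro x hx
    rw [Finset.mem_Iic] at hx ⊢
    rcases lt_or_eq_of_le hx with h | h
    · exact (hlt_fix x h).le
    · rw [h, hfi]
  have hIicc : IsConsecutive (Finset.Iic i) := by
    intro x hx y hy z _ hzy
    rw [Finset.mem_Iic] at hy ⊢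
    exact le_trans hzy hy
  rcases hs (Finset.Iic i) hIicc (by rw [image_eq_of_closed hclI]; exact hIicc) with h | h
  · -- i = 0 : use Ioi i
    rw [Fin.card_Iic] at h
    have hclO : ∀ x ∈ Finset.Ioi i, σ x ∈ Finset.Ioi i := by
      intro x hx
      rw [Finset.mem_Ioi] at hx ⊢
      exact hgt_fix x hx
    have hOc : IsConsecutive (Finset.Ioi i) := by
      intro x hx y hy z hxz _
      rw [Finset.mem_Ioi] at hx ⊢
      exact lt_of_lt_of_le hx hxz
    rcases hs (Finset.Ioi i) hOc (by rw [image_eq_of_closed hclO]; exact hOc) with h' | h' <;>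
      · rw [Fin.card_Ioi] at h'
        omega
  · -- i = n - 1 : use Iio i
    rw [Fin.card_Iic] at h
    have hclO : ∀ x ∈ Finset.Iio i, σ x ∈ Finset.Iio i := by
      intro x hx
      rw [Finset.mem_Iio] at hx ⊢
      exact hlt_fix x hx
    have hOc : IsConsecutive (Finset.Iio i) := by
      intro x hx y hy z _ hzy
      rw [Finset.mem_Iio] at hy ⊢
      exact lt_of_le_of_lt hzy hy
    rcases hs (Finset.Iio i) hOc (by rw [image_eq_of_closed hclO]; exact hOc) with h' | h' <;>
      · rw [Fin.card_Iio] at h'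
        omega

lemma simple_dyck (hn : 2 < n) (hav : Avoids321 σ) (hinv : IsInvolution σ)
    (hs : IsSimplePerm σ) (hfix : ∀ i : Fin n, σ i ≠ i) : DyckCond σ := by
  intro k hk1 hkn
  rw [natCard_eq, natCard_eq]
  by_contra hcon
  push_neg at hcon
  have hcl : ∀ j : Fin n, (j : ℕ) < k → ((σ j : Fin n) : ℕ) < k := by
    intro j hj
    rcases lt_trichotomy (σ j) j with h | h | h
    · exact lt_trans (Fin.lt_def.mp h) hj
    · exact absurd h (hfix j)
    · by_contra hout
      push_neg at hout
      have hsub : ∀ d ∈ (Finset.univ.filter fun j : Fin n => (j : ℕ) < k ∧ σ j < j),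
          σ d ∈ (Finset.univ.filter fun j : Fin n => (j : ℕ) < k ∧ j < σ j).erase j := by
        intro d hd
        simp only [Finset.mem_filter, Finset.mem_univ, true_and] at hd
        rw [Finset.mem_erase]
        constructor
        · intro he
          have : d = σ j := by rw [← he, hinv]
          rw [this] at hd
          omega
        · simp only [Finset.mem_filter, Finset.mem_univ, true_and]
          refine ⟨lt_trans (Fin.lt_def.mp hd.2) hd.1, ?_⟩
          rw [hinv]
          exact hd.2
      have h2 := Finset.card_le_card_of_injOn σ hsub
        (fun u _ v _ huv => σ.injective huv)
      have hjE : j ∈ (Finset.univ.filter fun j : Fin n => (j : ℕ) < k ∧ j < σ j) := by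
        simp only [Finset.mem_filter, Finset.mem_univ, true_and]
        exact ⟨hj, h⟩
      rw [Finset.card_erase_of_mem hjE] at h2
      have h3 : 1 ≤ (Finset.univ.filter fun j : Fin n => (j : ℕ) < k ∧ j < σ j).card :=
        Finset.card_pos.mpr ⟨j, hjE⟩
      omega
  set P := Finset.univ.filter (fun j : Fin n => (j : ℕ) < k) with hP
  have hPc : IsConsecutive P := by
    intro x hx y hy z _ hzy
    simp only [hP, Finset.mem_filter, Finset.mem_univ, true_and] at hy ⊢
    exact lt_of_le_of_lt (Fin.le_def.mp hzy) hy
  have hcl' : ∀ x ∈ P, σ x ∈ P := by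
    intro x hx
    simp only [hP, Finset.mem_filter, Finset.mem_univ, true_and] at hx ⊢
    exact hcl x hx
  have hcard : P.card = k := by
    have : P = Finset.Iio (⟨k, hkn⟩ : Fin n) := by
      ext j
      simp [hP, Finset.mem_Iio, Fin.lt_def]
    rw [this, Fin.card_Iio]
  rcases hs P hPc (by rw [image_eq_of_closed hcl']; exact hPc) with h | h
  · have hk : k = 1 := by omega
    have hn0 : 0 < n := by omega
    have hj0 : ((⟨0, hn0⟩ : Fin n) : ℕ) < k := by
      have : ((⟨0, hn0⟩ : Fin n) : ℕ) = 0 := rfl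
      omega
    have h5 := hcl _ hj0
    have h6 : ((⟨0, hn0⟩ : Fin n) : ℕ) = 0 := rfl
    exact hfix ⟨0, hn0⟩ (Fin.ext (by omega))
  · omega

lemma simple_third (hn : 2 < n) (hs : IsSimplePerm σ) : NoDoubleRise σ := by
  rintro ⟨x, hx, h1, h2, h3⟩
  set x' : Fin n := ⟨(x : ℕ) + 1, hx⟩ with hx'
  set I : Finset (Fin n) := {x, x'} with hI
  have hxx' : x ≠ x' := by
    intro h
    have := congrArg Fin.val h
    simp [hx'] at this
  have hcard : I.card = 2 := by
    rw [hI, Finset.card_insert_of_notMem (by simp [hxx']), Finset.card_singleton]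
  have hIc : IsConsecutive I := by
    intro u hu v hv z hz1 hz2
    simp only [hI, Finset.mem_insert, Finset.mem_singleton] at hu hv ⊢
    have hul : (x : ℕ) ≤ (u : ℕ) := by
      rcases hu with rfl | rfl
      · omega
      · simp [hx']
    have hvr : (v : ℕ) ≤ (x : ℕ) + 1 := by
      rcases hv with rfl | rfl
      · omega
      · simp [hx']
    have hl := le_trans hul (Fin.le_def.mp hz1)
    have hr := le_trans (Fin.le_def.mp hz2) hvr
    have : (z : ℕ) = (x : ℕ) ∨ (z : ℕ) = (x : ℕ) + 1 := by omega
    rcases this with h | h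
    · exact Or.inl (Fin.ext h)
    · exact Or.inr (Fin.ext (by simp [hx', h]))
  have hJc : IsConsecutive (I.image σ) := by
    have hJ : I.image σ = {σ x, σ x'} := by
      rw [hI, Finset.image_insert, Finset.image_singleton]
    rw [hJ]
    intro u hu v hv z hz1 hz2
    simp only [Finset.mem_insert, Finset.mem_singleton] at hu hv ⊢
    have hul : ((σ x : Fin n) : ℕ) ≤ (u : ℕ) := by
      rcases hu with rfl | rfl
      · omega
      · omega
    have hvr : (v : ℕ) ≤ ((σ x : Fin n) : ℕ) + 1 := by
      rcases hv with rfl | rfl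
      · omega
      · omega
    have hl := le_trans hul (Fin.le_def.mp hz1)
    have hr := le_trans (Fin.le_def.mp hz2) hvr
    have : (z : ℕ) = ((σ x : Fin n) : ℕ) ∨ (z : ℕ) = ((σ x : Fin n) : ℕ) + 1 := by omega
    rcases this with h | h
    · exact Or.inl (Fin.ext h)
    · exact Or.inr (Fin.ext (by omega))
  rcases hs I hIc hJc with h | h <;> omega

end SimpleDyckAux

open SimpleDyckAux in
/-- A 321-avoiding involution of length > 2 is simple iff it has no fixed points,
its associated Dyck path is irreducible, and no pair of consecutive up steps
corresponds to a pair of consecutive down steps. -/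
theorem simple_iff_dyck_conditions {n : ℕ} (hn : 2 < n)
    (σ : Equiv.Perm (Fin n)) (hinv : IsInvolution σ) (hav : Avoids321 σ) :
    IsSimplePerm σ ↔
      ((∀ i : Fin n, σ i ≠ i) ∧
       (∀ k : ℕ, 1 ≤ k → k < n →
         Nat.card {j : Fin n // (j : ℕ) < k ∧ σ j < j} <
           Nat.card {j : Fin n // (j : ℕ) < k ∧ j < σ j}) ∧
       ¬ ∃ x : Fin n, ∃ hx : (x : ℕ) + 1 < n,
         x < σ x ∧
         (⟨(x : ℕ) + 1, hx⟩ : Fin n) < σ ⟨(x : ℕ) + 1, hx⟩ ∧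
         (σ ⟨(x : ℕ) + 1, hx⟩ : ℕ) = (σ x : ℕ) + 1) := by
  constructor
  · intro hs
    have hfix := simple_no_fixed hn hav hinv hs
    exact ⟨hfix, simple_dyck hn hav hinv hs hfix, simple_third hn hs⟩
  · rintro ⟨hfix, hdy, hthird⟩
    have hdy' : DyckCond σ := hdy
    have hthird' : NoDoubleRise σ := hthird
    intro I hIc hJc
    by_contra hcon
    push_neg at hcon
    obtain ⟨h1, h2⟩ := hcon
    have hcard2 : 1 < I.card := by omega
    have hcardn : I.card < n := by
      have := Finset.card_le_univ I
      simp only [Finset.card_univ, Fintype.card_fin] at this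
      omega
    set J := I.image σ with hJ
    have hJI : ∀ y ∈ J, σ y ∈ I := by
      intro y hy
      obtain ⟨u, hu, rfl⟩ := Finset.mem_image.mp hy
      rw [hinv]
      exact hu
    have hIJ : ∀ x ∈ I, σ x ∈ J := fun x hx => Finset.mem_image_of_mem σ hx
    by_cases hK : (I ∩ J).Nonempty
    · refine no_invariant_interval hav hinv hfix hdy' (I := I ∩ J) ?_ hK ?_ ?_
      · intro x hx y hy z hz1 hz2
        rw [Finset.mem_inter] at hx hy ⊢
        exact ⟨hIc x hx.1 y hy.1 z hz1 hz2, hJc x hx.2 y hy.2 z hz1 hz2⟩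
      · exact lt_of_le_of_lt (Finset.card_le_card Finset.inter_subset_left) hcardn
      · intro x hx
        rw [Finset.mem_inter] at hx ⊢
        exact ⟨hJI x hx.2, hIJ x hx.1⟩
    · have hIne : I.Nonempty := Finset.card_pos.mp (by omega)
      have hJne : J.Nonempty := hIne.image σ
      have hdisj : I.max' hIne < J.min' hJne ∨ J.max' hJne < I.min' hIne := by
        by_contra hc
        push_neg at hc
        apply hK
        rcases le_total (I.min' hIne) (J.min' hJne) with h | h
        · exact ⟨J.min' hJne, Finset.mem_inter.mpr
            ⟨hIc _ (I.min'_mem hIne) _ (I.max'_mem hIne) _ h hc.1, J.min'_mem hJne⟩⟩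
        · exact ⟨I.min' hIne, Finset.mem_inter.mpr
            ⟨I.min'_mem hIne, hJc _ (J.min'_mem hJne) _ (J.max'_mem hJne) _ h hc.2⟩⟩
      rcases hdisj with h | h
      · exact no_shift hav hinv hthird' hIc hJc hIJ hJI
          (fun x hx y hy => lt_of_le_of_lt (I.le_max' x hx)
            (lt_of_lt_of_le h (J.min'_le y hy))) hcard2
      · refine no_shift hav hinv hthird' hJc hIc hJI hIJ
          (fun y hy x hx => lt_of_le_of_lt (J.le_max' y hy)
            (lt_of_lt_of_le h (I.min'_le x hx))) ?_
        rw [hJ, Finset.card_image_of_injective _ σ.injective]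
        exact hcard2
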